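/- Let R be a commutative ring, n ≥ 2 an even integer, and f, g ∈ R[x] of degree < n. For every integer k with n/2 < k ≤ n − 1, the k-th coefficient of the product of f and g in R[x]/(x^n − x^{n/2} + 1) is h_k = a_k + a_{k+n/2}. -/

import Mathlib

/-!
Put `Y = X ^ (n / 2)`. Since `(Y² - Y + 1) * (Y + 1) = Y³ + 1`, modulo `Y² - Y + 1` we have
`Y² ≡ Y - 1` and `Y³ ≡ -1`. The product `c = f * g` has degree `< 2n`, so it splits into blocks
`c = low + Y² * (mid + Y * top)` with `deg low < n` and `deg mid, deg top < n / 2`, and its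
remainder is `low + (Y - 1) * mid - top`, of degree `< n`. For `n / 2 ≤ k < n` the `k`-th
coefficient of this remainder is `c_k + c_{k + n/2}`; finally `a_d = c_d` since `deg f, deg g < n`.
-/

open Polynomial

/-- `a_d = Σ_{i+j=d, 0 ≤ i,j ≤ n−1} f_i g_j`. -/
def convCoeff {R : Type*} [CommRing R] (n : ℕ) (f g : Polynomial R) (d : ℕ) : R :=
  ∑ i ∈ Finset.range n, ∑ j ∈ Finset.range n,
    if i + j = d then f.coeff i * g.coeff j else 0

namespace Polynomial

variable {R : Type*} [CommRing R]

theorem coeff_modByMonic_X_pow (p : R[X]) (n i : ℕ) :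
    (p %ₘ X ^ n).coeff i = if i < n then p.coeff i else 0 := by
  split_ifs with hi
  · simpa [coeff_X_pow_mul', not_le.2 hi] using
      congrArg (coeff · i) (modByMonic_add_div p (X ^ n))
  · nontriviality R
    exact coeff_eq_zero_of_degree_lt <|
      (degree_modByMonic_lt p (monic_X_pow n)).trans_le (by simpa using hi)

theorem coeff_divByMonic_X_pow (p : R[X]) (n i : ℕ) :
    (p /ₘ X ^ n).coeff i = p.coeff (n + i) := by
  simpa [coeff_modByMonic_X_pow, coeff_X_pow_mul'] using
    congrArg (coeff · (n + i)) (modByMonic_add_div p (X ^ n))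

theorem degree_mul_lt_add {p q : R[X]} {m n : ℕ} (hp : p.degree < m) (hq : q.degree < n) :
    (p * q).degree < ↑(m + n) := by
  rcases eq_or_ne q 0 with rfl | hq0
  · simp
  refine (degree_mul_le p q).trans_lt ?_
  exact_mod_cast WithBot.add_lt_add_of_lt_of_le (degree_ne_bot.2 hq0) hp hq.le

theorem monic_X_pow_two_mul_sub_X_pow_add_one (m : ℕ) :
    (X ^ (2 * m) - X ^ m + 1 : R[X]).Monic := by
  rcases Nat.eq_zero_or_pos m with rfl | hm
  · simp
  monicity!
  simp [hm.ne', show m ≤ 2 * m by omega, show ¬ 2 * m ≤ m by omega]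

theorem natDegree_X_pow_two_mul_sub_X_pow_add_one [Nontrivial R] {m : ℕ} (hm : 0 < m) :
    (X ^ (2 * m) - X ^ m + 1 : R[X]).natDegree = 2 * m := by
  compute_degree!
  all_goals first | omega | simp [hm.ne', show 2 * m ≠ m by omega]

theorem modByMonic_X_pow_two_mul_sub_X_pow_add_one {m : ℕ} (hm : 0 < m) (c : R[X])
    (hc : c.degree < ↑(4 * m)) :
    c %ₘ (X ^ (2 * m) - X ^ m + 1) =
      c %ₘ X ^ (2 * m) + (X ^ m - 1) * (c /ₘ X ^ (2 * m) %ₘ X ^ m)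
        - c /ₘ X ^ (2 * m) /ₘ X ^ m := by
  nontriviality R
  have hmonic := monic_X_pow_two_mul_sub_X_pow_add_one (R := R) m
  refine (div_modByMonic_unique (c /ₘ X ^ (2 * m) + c /ₘ X ^ (2 * m) /ₘ X ^ m) _ hmonic
    ⟨?_, ?_⟩).2
  · linear_combination modByMonic_add_div c (X ^ (2 * m))
      + (X ^ m - 1) * modByMonic_add_div (c /ₘ X ^ (2 * m)) (X ^ m)
  · rw [degree_eq_natDegree hmonic.ne_zero, natDegree_X_pow_two_mul_sub_X_pow_add_one hm,
      degree_lt_iff_coeff_zero]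
    intro j hj
    have hcj : c.coeff (2 * m + (m + j)) = 0 :=
      coeff_eq_zero_of_degree_lt (hc.trans_le (by exact_mod_cast (by omega : 4 * m ≤ _)))
    simp [sub_mul, coeff_X_pow_mul', coeff_modByMonic_X_pow, coeff_divByMonic_X_pow, hcj,
      show ¬ j < 2 * m by omega, show ¬ j < m by omega, show ¬ j - m < m by omega]

theorem coeff_modByMonic_X_pow_two_mul_sub_X_pow_add_one {m k : ℕ} (c : R[X])
    (hc : c.degree < ↑(4 * m)) (hk₁ : m ≤ k) (hk₂ : k < 2 * m) :
    (c %ₘ (X ^ (2 * m) - X ^ m + 1)).coeff k = c.coeff k + c.coeff (k + m) := by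
  have hck : c.coeff (2 * m + (m + k)) = 0 :=
    coeff_eq_zero_of_degree_lt (hc.trans_le (by exact_mod_cast (by omega : 4 * m ≤ _)))
  rw [modByMonic_X_pow_two_mul_sub_X_pow_add_one (by omega) c hc]
  simp [sub_mul, coeff_X_pow_mul', coeff_modByMonic_X_pow, coeff_divByMonic_X_pow, hck, hk₁, hk₂,
    show k - m < m by omega, show ¬ k < m by omega, show 2 * m + (k - m) = k + m by omega]

end Polynomial

theorem convCoeff_eq_coeff_mul {R : Type*} [CommRing R] {n : ℕ} {f g : R[X]}
    (hf : f.degree < n) (hg : g.degree < n) (d : ℕ) :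
    convCoeff n f g d = (f * g).coeff d := by
  rw [coeff_mul, convCoeff, ← Finset.sum_product', ← Finset.sum_filter]
  refine Finset.sum_subset (fun x hx => by simp_all) fun x hx hx' => ?_
  obtain h | h : n ≤ x.1 ∨ n ≤ x.2 := by
    simp only [Finset.mem_filter, Finset.mem_product, Finset.mem_range,
      Finset.HasAntidiagonal.mem_antidiagonal] at hx hx'
    omega
  · rw [coeff_eq_zero_of_degree_lt (hf.trans_le (by exact_mod_cast h)), zero_mul]
  · rw [coeff_eq_zero_of_degree_lt (hg.trans_le (by exact_mod_cast h)), mul_zero]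

theorem coeff_mul_mod_high_general {R : Type*} [CommRing R] (n : ℕ) (hne : Even n)
    (f g : Polynomial R) (hf : f.degree < n) (hg : g.degree < n)
    (k : ℕ) (hk₁ : n / 2 < k) (hk₂ : k ≤ n - 1) :
    ((f * g) %ₘ ((X : Polynomial R) ^ n - X ^ (n / 2) + 1)).coeff k
      = convCoeff n f g k + convCoeff n f g (k + n / 2) := by
  obtain ⟨m, rfl⟩ := hne
  rw [convCoeff_eq_coeff_mul hf hg, convCoeff_eq_coeff_mul hf hg, show (m + m) / 2 = m by omega,
    ← two_mul]
  refine coeff_modByMonic_X_pow_two_mul_sub_X_pow_add_one (f * g) ?_ (by omega) (by omega)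
  simpa [show m + m + (m + m) = 4 * m by omega] using degree_mul_lt_add hf hg

/-- For `n/2 < k ≤ n − 1`, the `k`-th coefficient of the product of `f` and `g` in
`R[x]/(xⁿ − x^{n/2} + 1)` is `h_k = a_k + a_{k+n/2}`. -/
theorem coeff_mul_mod_high {R : Type*} [CommRing R] (n : ℕ) (hn : 2 ≤ n) (hne : Even n)
    (f g : Polynomial R) (hf : f.degree < n) (hg : g.degree < n)
    (k : ℕ) (hk₁ : n / 2 < k) (hk₂ : k ≤ n - 1) :
    ((f * g) %ₘ ((X : Polynomial R) ^ n - X ^ (n / 2) + 1)).coeff k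
      = convCoeff n f g k + convCoeff n f g (k + n / 2) :=
  coeff_mul_mod_high_general n hne f g hf hg k hk₁ hk₂
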